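/- Let s be a point, and let a be a point to the northeast of s on a vertical line l(v), such that a is horizontally visible to the vertical line through s (meaning the horizontal segment from a leftward to the vertical line through s avoids all obstacles). Let l(v') be any vertical line strictly between the vertical line through s and l(v), and suppose q is an obstacle vertex horizontally visible to a with q on the opposite side of l(v) (so that the horizontal segment from q through l(v') and l(v) reaching a is obstacle-free at the height of a). Then q is horizontally visible to l(v'), and for any point b on l(v') with s.y ≤ b.y ≤ a.y that is visible appropriately, the concatenation s → s_h(l(v')) → b → q_h(l(v')) → a of vertical and horizontal segments on l(v') is an xy-monotone path from s to a, hence an L1 shortest s-to-a path. -/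

import Mathlib

open scoped Classical

/-- Points in the plane. -/
abbrev Pt : Type := ℝ × ℝ

/-- The L1 distance between two points of the plane. -/
noncomputable def d1 (p q : Pt) : ℝ := |p.1 - q.1| + |p.2 - q.2|

/-- The L1 length of a polygonal path given by its list of vertices. -/
noncomputable def len : List Pt → ℝ
  | [] => 0
  | [_] => 0
  | p :: q :: r => d1 p q + len (q :: r)

/-- A polygonal path is monotone in the coordinate `f` if that coordinate is
(weakly) monotone along the path, in one of the two directions. -/
def MonoCoord (f : Pt → ℝ) (L : List Pt) : Prop :=
  L.Chain' (fun a b => f a ≤ f b) ∨ L.Chain' (fun a b => f b ≤ f a)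

/-- A polygonal path is xy-monotone if it is both x-monotone and y-monotone. -/
def XYMono (L : List Pt) : Prop := MonoCoord Prod.fst L ∧ MonoCoord Prod.snd L

/-- A polygonal path lies in a set `B` if all its vertices and all its
segments lie in `B`. -/
def PathIn (B : Set Pt) (L : List Pt) : Prop :=
  (∀ p ∈ L, p ∈ B) ∧ L.Chain' (fun a b => segment ℝ a b ⊆ B)

/-! Along the rerouted path the x-coordinate only grows (out to the cut-line, then on to `a`)
and so does the y-coordinate (up the cut-line), so the coordinate differences of consecutive
vertices telescope and its length is the L1 distance of its endpoints; by the triangle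
inequality no path is shorter. Each of its pieces is a sub-segment of one of the given
obstacle-free segments. -/

section SegmentCoordinates

variable {𝕜 E : Type*} [Field 𝕜] [LinearOrder 𝕜] [IsStrictOrderedRing 𝕜]
  [AddCommGroup E] [Module 𝕜 E]

theorem Prod.mk_mem_segment_of_snd_eq {p r : 𝕜 × E} {x : 𝕜} (hpr : p.2 = r.2)
    (hx : x ∈ Set.Icc p.1 r.1) : (x, p.2) ∈ segment 𝕜 p r := by
  obtain ⟨p₁, p₂⟩ := p
  obtain ⟨r₁, r₂⟩ := r
  dsimp only at hpr hx ⊢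
  subst hpr
  exact Prod.image_mk_segment_left (𝕜 := 𝕜) p₁ r₁ p₂ ▸
    Set.mem_image_of_mem _ (Icc_subset_segment hx)

theorem Prod.mk_mem_segment_of_fst_eq {p r : E × 𝕜} {y : 𝕜} (hpr : p.1 = r.1)
    (hy : y ∈ Set.Icc p.2 r.2) : (p.1, y) ∈ segment 𝕜 p r := by
  obtain ⟨p₁, p₂⟩ := p
  obtain ⟨r₁, r₂⟩ := r
  dsimp only at hpr hy ⊢
  subst hpr
  exact Prod.image_mk_segment_right (𝕜 := 𝕜) p₁ p₂ r₂ ▸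
    Set.mem_image_of_mem _ (Icc_subset_segment hy)

end SegmentCoordinates

theorem d1_triangle (p q r : Pt) : d1 p r ≤ d1 p q + d1 q r := by
  unfold d1
  linarith [abs_sub_le p.1 q.1 r.1, abs_sub_le p.2 q.2 r.2]

theorem d1_le_len : ∀ {L : List Pt} {s a : Pt}, L.head? = some s → L.getLast? = some a →
    d1 s a ≤ len L
  | [_], _, _, rfl, rfl => by simp [d1, len]
  | x :: y :: r, _, a, rfl, hlast =>
    calc d1 x a ≤ d1 x y + d1 y a := d1_triangle x y a
      _ ≤ d1 x y + len (y :: r) := by gcongr; exact d1_le_len rfl hlast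

theorem MonoCoord.tail {f : Pt → ℝ} {x : Pt} {t : List Pt} (h : MonoCoord f (x :: t)) :
    MonoCoord f t :=
  h.imp List.IsChain.tail List.IsChain.tail

theorem MonoCoord.abs_sub_eq_add {f : Pt → ℝ} {x y z : Pt} {r : List Pt}
    (h : MonoCoord f (x :: y :: r)) (hz : (y :: r).getLast? = some z) :
    |f x - f z| = |f x - f y| + |f y - f z| := by
  have hz' := List.getLast_of_getLast?_eq_some hz
  rcases h with h | h
  · have hxy : f x ≤ f y := (List.isChain_cons_cons.1 h).1
    have hyz : f y ≤ f z := h.tail.backwards_cons_induction_head (fun w => f w ≤ f z) r hz'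
      (fun _ _ => le_trans) le_rfl
    rw [abs_of_nonpos (sub_nonpos.2 hxy), abs_of_nonpos (sub_nonpos.2 hyz),
      abs_of_nonpos (sub_nonpos.2 (hxy.trans hyz))]
    ring
  · have hxy : f y ≤ f x := (List.isChain_cons_cons.1 h).1
    have hyz : f z ≤ f y := h.tail.backwards_cons_induction_head (fun w => f z ≤ f w) r hz'
      (fun _ _ hxy hyz => hyz.trans hxy) le_rfl
    rw [abs_of_nonneg (sub_nonneg.2 hxy), abs_of_nonneg (sub_nonneg.2 hyz),
      abs_of_nonneg (sub_nonneg.2 (hyz.trans hxy))]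
    ring

theorem XYMono.len_eq_d1 : ∀ {L : List Pt} {s a : Pt}, XYMono L → L.head? = some s →
    L.getLast? = some a → len L = d1 s a
  | [_], _, _, _, rfl, rfl => by simp [d1, len]
  | x :: y :: r, _, a, ⟨hx, hy⟩, rfl, hlast => by
    rw [len, XYMono.len_eq_d1 ⟨hx.tail, hy.tail⟩ rfl hlast, d1, d1, d1,
      hx.abs_sub_eq_add hlast, hy.abs_sub_eq_add hlast]
    ring

theorem PathIn.singleton {B : Set Pt} {p : Pt} (hp : p ∈ B) : PathIn B [p] :=
  ⟨by simpa using hp, List.isChain_singleton p⟩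

theorem PathIn.cons {B : Set Pt} {p q : Pt} {r : List Pt} (hpq : segment ℝ p q ⊆ B)
    (h : PathIn B (q :: r)) : PathIn B (p :: q :: r) :=
  ⟨List.forall_mem_cons.2 ⟨hpq (left_mem_segment ℝ p q), h.1⟩,
    List.isChain_cons_cons.2 ⟨hpq, h.2⟩⟩

theorem reroute_through_intermediate_cutline_general (F : Set Pt) (s a q b : Pt)
    (xv xv' : ℝ)
    (ha : a.1 = xv) (hbetween : s.1 < xv' ∧ xv' < xv)
    (havis : segment ℝ ((s.1, a.2) : Pt) a ⊆ F)
    (hq : q.2 = a.2 ∧ q.1 < xv' ∧ segment ℝ q a ⊆ F)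
    (hb : b.1 = xv' ∧ s.2 ≤ b.2 ∧ b.2 ≤ a.2)
    (hs1 : segment ℝ s ((xv', s.2) : Pt) ⊆ F)
    (hvert : segment ℝ ((xv', s.2) : Pt) ((xv', a.2) : Pt) ⊆ F) :
    segment ℝ q ((xv', q.2) : Pt) ⊆ F ∧
    PathIn F [s, (xv', s.2), b, (xv', a.2), a] ∧
    XYMono [s, (xv', s.2), b, (xv', a.2), a] ∧
    len [s, (xv', s.2), b, (xv', a.2), a] = d1 s a ∧
    ∀ M : List Pt, PathIn F M → M.head? = some s → M.getLast? = some a →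
      len [s, (xv', s.2), b, (xv', a.2), a] ≤ len M := by
  obtain ⟨hq₂, hq₁, hqa⟩ := hq
  obtain ⟨rfl, hsb, hba⟩ := hb
  have hxa : b.1 ≤ a.1 := ha ▸ hbetween.2.le
  have hq_cut : ((b.1, q.2) : Pt) ∈ segment ℝ q a :=
    Prod.mk_mem_segment_of_snd_eq hq₂ ⟨hq₁.le, hxa⟩
  have ha_cut : ((b.1, a.2) : Pt) ∈ segment ℝ ((s.1, a.2) : Pt) a :=
    Prod.mk_mem_segment_of_snd_eq rfl ⟨hbetween.1.le, hxa⟩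
  have hb_cut : b ∈ segment ℝ ((b.1, s.2) : Pt) ((b.1, a.2) : Pt) :=
    Prod.mk_mem_segment_of_fst_eq rfl ⟨hsb, hba⟩
  have hmono : XYMono [s, (b.1, s.2), b, (b.1, a.2), a] :=
    ⟨.inl (.cons_cons hbetween.1.le (.cons_cons le_rfl (.cons_cons le_rfl
      (.cons_cons hxa (.singleton a))))),
    .inl (.cons_cons le_rfl (.cons_cons hsb (.cons_cons hba (.cons_cons le_rfl (.singleton a)))))⟩
  have hlen := hmono.len_eq_d1 rfl rfl
  refine ⟨(convex_segment q a).segment_subset (left_mem_segment ℝ q a) hq_cut |>.trans hqa,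
    ?_, hmono, hlen, fun M _ hM₀ hM₁ => hlen ▸ d1_le_len hM₀ hM₁⟩
  refine .cons hs1 (.cons ?_ (.cons ?_ (.cons ?_ (.singleton (havis (right_mem_segment ℝ _ _))))))
  · exact ((convex_segment _ _).segment_subset (left_mem_segment ℝ _ _) hb_cut).trans hvert
  · exact ((convex_segment _ _).segment_subset hb_cut (right_mem_segment ℝ _ _)).trans hvert
  · exact ((convex_segment _ _).segment_subset ha_cut (right_mem_segment ℝ _ _)).trans havis

/-- `F` is the free space. `a` lies to the northeast of `s` on
the vertical line `x = xv`, is horizontally visible to the vertical line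
through `s`; `xv'` is strictly between `s.1` and `xv`; `q` is an obstacle
vertex with `q.2 = a.2`, `q.1 < xv'`, whose horizontal segment to `a` is
obstacle-free. Then `q` is horizontally visible to the line `x = xv'`, and for
any point `b` on that line with `s.2 ≤ b.2 ≤ a.2` (with the stated visibility
of the connecting segments), the concatenation
`s → s_h(l(v')) → b → q_h(l(v')) → a` is an xy-monotone path in `F` from `s`
to `a`, hence an L1 shortest s-to-a path. -/
theorem reroute_through_intermediate_cutline (F : Set Pt) (s a q b : Pt)
    (xv xv' : ℝ)
    (ha : a.1 = xv) (hbetween : s.1 < xv' ∧ xv' < xv)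
    (hne : s.1 ≤ a.1 ∧ s.2 ≤ a.2)
    (havis : segment ℝ ((s.1, a.2) : Pt) a ⊆ F)
    (hq : q.2 = a.2 ∧ q.1 < xv' ∧ segment ℝ q a ⊆ F)
    (hb : b.1 = xv' ∧ s.2 ≤ b.2 ∧ b.2 ≤ a.2)
    (hs1 : segment ℝ s ((xv', s.2) : Pt) ⊆ F)
    (hvert : segment ℝ ((xv', s.2) : Pt) ((xv', a.2) : Pt) ⊆ F) :
    segment ℝ q ((xv', q.2) : Pt) ⊆ F ∧
    PathIn F [s, (xv', s.2), b, (xv', a.2), a] ∧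
    XYMono [s, (xv', s.2), b, (xv', a.2), a] ∧
    len [s, (xv', s.2), b, (xv', a.2), a] = d1 s a ∧
    ∀ M : List Pt, PathIn F M → M.head? = some s → M.getLast? = some a →
      len [s, (xv', s.2), b, (xv', a.2), a] ≤ len M :=
  reroute_through_intermediate_cutline_general F s a q b xv xv' ha hbetween havis hq hb hs1 hvert
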